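/- Let 𝒢 ⊆ ℋ be sub-σ-algebras of 𝒜. If C*_A(P, ℋ) ⊆ C*_A(P, 𝒢), then 𝒢 is sufficient for ℋ with respect to A₁ under P, i.e. P[A₁ ∩ H] = E_P[1_H · P[A₁ | 𝒢]] for every H ∈ ℋ (equivalently P[A₁ | 𝒢] = P[A₁ | ℋ] P-a.s.). -/

import Mathlib

open MeasureTheory Set

/-- `Ψ` is an `m`-measurable version of the conditional probability of `A` given `m` under `P`
(a measure on the ambient σ-algebra `mΩ`): for every `m`-measurable `H`,
`P (A ∩ H) = ∫_H Ψ dP`. -/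
def IsCondVersion {Ω : Type*} [mΩ : MeasurableSpace Ω] (m : MeasurableSpace Ω)
    (P : @Measure Ω mΩ) (A : Set Ω) (Ψ : Ω → ℝ) : Prop :=
  Measurable[m] Ψ ∧
  ∀ H : Set Ω, MeasurableSet[m] H → (P (A ∩ H)).toReal = ∫ ω in H, Ψ ω ∂P

/-- `P` and `Q` are related by covariate shift w.r.t. the sub-σ-algebra `m`: there is a common
`m`-measurable `[0,1]`-valued version `Ψ` of the conditional probability of `A` given `m`. -/
def CovShift {Ω : Type*} [mΩ : MeasurableSpace Ω] (m : MeasurableSpace Ω)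
    (P Q : @Measure Ω mΩ) (A : Set Ω) : Prop :=
  ∃ Ψ : Ω → ℝ, (∀ ω, Ψ ω ∈ Set.Icc (0 : ℝ) 1) ∧
    @IsCondVersion Ω mΩ m P A Ψ ∧ @IsCondVersion Ω mΩ m Q A Ψ

/-- `Q` is absolutely continuous w.r.t. `P` on the sub-σ-algebra `m`. -/
def AbsContOn {Ω : Type*} [mΩ : MeasurableSpace Ω] (m : MeasurableSpace Ω)
    (P Q : @Measure Ω mΩ) : Prop :=
  ∀ N : Set Ω, MeasurableSet[m] N → P N = 0 → Q N = 0

/-- `C*_A(P, m)`: the probability measures `Q` absolutely continuous w.r.t. `P` on `m` that are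
related to `P` by covariate shift w.r.t. `m`. -/
def CAstar {Ω : Type*} [mΩ : MeasurableSpace Ω] (m : MeasurableSpace Ω)
    (P : @Measure Ω mΩ) (A : Set Ω) : Set (@Measure Ω mΩ) :=
  {Q | @IsProbabilityMeasure Ω mΩ Q ∧ @AbsContOn Ω mΩ m P Q ∧ @CovShift Ω mΩ m P Q A}

/-!
Fix `S ∈ ℋ` and tilt `P` by the `ℋ`-measurable density `(1 + 1_S) / (1 + P S)`. Any version
of `P[A₁ | ℋ]` is still a version of the conditional probability under the tilted measure `Q`,
so `Q ∈ C*_A(P, ℋ) ⊆ C*_A(P, 𝒢)`, giving a common `𝒢`-version `Φ`, which equals `P[A₁ | 𝒢]`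
`P`-a.e. Comparing `Q A₁ = ∫ Φ dQ` with `P A₁ = ∫ Φ dP` isolates `P (A₁ ∩ S) = ∫_S Φ dP`.
-/

open scoped ENNReal

variable {Ω : Type*} {m mΩ : MeasurableSpace Ω} {P Q : Measure Ω}
  {A S : Set Ω} {Ψ Φ : Ω → ℝ}

namespace IsCondVersion

theorem integrable [IsFiniteMeasure P] (hm : m ≤ mΩ) (hΨ : IsCondVersion m P A Ψ)
    (hΨ01 : ∀ ω, Ψ ω ∈ Icc (0 : ℝ) 1) : Integrable Ψ P :=
  Integrable.of_bound (hΨ.1.mono hm le_rfl).aestronglyMeasurable 1 <| ae_of_all _ fun ω =>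
    abs_le.2 ⟨by linarith [(hΨ01 ω).1], (hΨ01 ω).2⟩

theorem ae_eq [IsFiniteMeasure P] (hm : m ≤ mΩ) (hΨ : IsCondVersion m P A Ψ)
    (hΦ : IsCondVersion m P A Φ) (hΨi : Integrable Ψ P) (hΦi : Integrable Φ P) :
    Ψ =ᵐ[P] Φ :=
  ae_eq_of_forall_setIntegral_eq_of_sigmaFinite' hm (fun _ _ _ => hΨi.integrableOn)
    (fun _ _ _ => hΦi.integrableOn) (fun T hT _ => by rw [← hΨ.2 T hT, ← hΦ.2 T hT])
    hΨ.1.stronglyMeasurable.aestronglyMeasurable hΦ.1.stronglyMeasurable.aestronglyMeasurable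

theorem smul (hΨ : IsCondVersion m P A Ψ) (c : ℝ≥0∞) : IsCondVersion m (c • P) A Ψ := by
  refine ⟨hΨ.1, fun T hT => ?_⟩
  rw [Measure.restrict_smul, integral_smul_measure, ← hΨ.2 T hT, Measure.smul_apply,
    smul_eq_mul, ENNReal.toReal_mul, smul_eq_mul]

theorem restrict (hm : m ≤ mΩ) (hΨ : IsCondVersion m P A Ψ) (hS : MeasurableSet[m] S) :
    IsCondVersion m (P.restrict S) A Ψ := by
  refine ⟨hΨ.1, fun T hT => ?_⟩
  rw [Measure.restrict_restrict (hm T hT), ← hΨ.2 (T ∩ S) (hT.inter hS),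
    Measure.restrict_apply' (hm S hS), inter_assoc]

theorem add [IsFiniteMeasure P] [IsFiniteMeasure Q] (hP : IsCondVersion m P A Ψ)
    (hQ : IsCondVersion m Q A Ψ) (hPi : Integrable Ψ P) (hQi : Integrable Ψ Q) :
    IsCondVersion m (P + Q) A Ψ := by
  refine ⟨hP.1, fun T hT => ?_⟩
  rw [Measure.restrict_add, integral_add_measure hPi.restrict hQi.restrict, ← hP.2 T hT,
    ← hQ.2 T hT, Measure.add_apply, ENNReal.toReal_add (measure_ne_top _ _) (measure_ne_top _ _)]

/-- Evaluating both version identities on `univ`: the `P`-parts cancel and only the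
contribution of `P.restrict S` survives. -/
theorem toReal_inter_eq_setIntegral_of_smul_add_restrict [IsFiniteMeasure P] {c : ℝ≥0∞}
    (hc₀ : c ≠ 0) (hc : c ≠ ∞) (hA : MeasurableSet A) (hΦi : Integrable Φ P)
    (hP : IsCondVersion m P A Φ) (hQ : IsCondVersion m (c • (P + P.restrict S)) A Φ) :
    (P (A ∩ S)).toReal = ∫ ω in S, Φ ω ∂P := by
  have hPA := hP.2 univ MeasurableSet.univ
  have hQA := hQ.2 univ MeasurableSet.univ
  simp only [inter_univ, Measure.restrict_univ] at hPA hQA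
  rw [integral_smul_measure, integral_add_measure hΦi hΦi.restrict, ← hPA, Measure.smul_apply,
    Measure.add_apply, Measure.restrict_apply hA, smul_eq_mul, ENNReal.toReal_mul,
    ENNReal.toReal_add (measure_ne_top _ _) (measure_ne_top _ _), smul_eq_mul] at hQA
  have hc' : c.toReal ≠ 0 := ENNReal.toReal_ne_zero.2 ⟨hc₀, hc⟩
  linarith [mul_left_cancel₀ hc' hQA]

end IsCondVersion

/-- The clipped conditional expectation `max 0 (min 1 P[1_A | m])`. -/
theorem exists_isCondVersion_mem_Icc [IsFiniteMeasure P] (hm : m ≤ mΩ) (hA : MeasurableSet A) :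
    ∃ Ψ : Ω → ℝ, (∀ ω, Ψ ω ∈ Icc (0 : ℝ) 1) ∧ IsCondVersion m P A Ψ := by
  set f : Ω → ℝ := A.indicator 1
  have hf : Integrable f P := (integrable_const (1 : ℝ)).indicator hA
  have hf01 : ∀ ω, f ω ∈ Icc (0 : ℝ) 1 := fun ω => by
    by_cases hω : ω ∈ A <;> simp [f, hω]
  have h0 : ∀ᵐ ω ∂P, 0 ≤ P[f | m] ω := condExp_nonneg (ae_of_all _ fun ω => (hf01 ω).1)
  have h1 : ∀ᵐ ω ∂P, P[f | m] ω ≤ 1 := by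
    have h := condExp_mono (m := m) hf (integrable_const (1 : ℝ))
      (ae_of_all _ fun ω => (hf01 ω).2)
    rwa [condExp_const hm] at h
  have hclip : (fun ω => max 0 (min 1 (P[f | m] ω))) =ᵐ[P] P[f | m] := by
    filter_upwards [h0, h1] with ω h0ω h1ω
    rw [min_eq_right h1ω, max_eq_right h0ω]
  refine ⟨fun ω => max 0 (min 1 (P[f | m] ω)),
    fun ω => ⟨le_max_left _ _, max_le zero_le_one (min_le_left _ _)⟩,
    measurable_const.max (measurable_const.min stronglyMeasurable_condExp.measurable),
    fun T hT => ?_⟩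
  rw [integral_congr_ae (ae_restrict_of_ae hclip), setIntegral_condExp hm hf hT,
    integral_indicator_one hA, Measure.real_def, Measure.restrict_apply hA]

theorem smul_add_restrict_mem_CAstar [IsProbabilityMeasure P] (hm : m ≤ mΩ)
    (hA : MeasurableSet A) (hS : MeasurableSet[m] S) :
    (1 + P S)⁻¹ • (P + P.restrict S) ∈ CAstar m P A := by
  obtain ⟨Ψ, hΨ01, hΨ⟩ := exists_isCondVersion_mem_Icc (P := P) hm hA
  have hΨS := hΨ.restrict hm hS
  refine ⟨⟨?_⟩, fun N _ hN => ?_, Ψ, hΨ01, hΨ, ?_⟩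
  · rw [Measure.smul_apply, Measure.add_apply, measure_univ, Measure.restrict_apply_univ,
      smul_eq_mul, ENNReal.inv_mul_cancel (by simp) (by simp [measure_ne_top])]
  · simp [hN, Measure.absolutelyContinuous_restrict hN]
  · exact (hΨ.add hΨS (hΨ.integrable hm hΨ01) (hΨS.integrable hm hΨ01)).smul _

theorem stmt10_general {Ω : Type} [mΩ : MeasurableSpace Ω]
    {G H : MeasurableSpace Ω} (hGH : G ≤ H) (hH : H ≤ mΩ)
    (A₁ : Set Ω) (hA₁ : MeasurableSet[mΩ] A₁)
    (P : @Measure Ω mΩ) (hP : @IsProbabilityMeasure Ω mΩ P)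
    (hsub : @CAstar Ω mΩ H P A₁ ⊆ @CAstar Ω mΩ G P A₁)
    (ΨG : Ω → ℝ) (hΨGrange : ∀ ω, ΨG ω ∈ Set.Icc (0 : ℝ) 1)
    (hΨG : @IsCondVersion Ω mΩ G P A₁ ΨG) :
    @IsCondVersion Ω mΩ H P A₁ ΨG := by
  have hG : G ≤ mΩ := hGH.trans hH
  refine ⟨hΨG.1.mono hGH le_rfl, fun S hS => ?_⟩
  obtain ⟨-, -, Φ, hΦ01, hΦP, hΦQ⟩ := hsub (smul_add_restrict_mem_CAstar hH hA₁ hS)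
  have hΦi := hΦP.integrable hG hΦ01
  have hΦ : Φ =ᵐ[P] ΨG := hΦP.ae_eq hG hΨG hΦi (hΨG.integrable hG hΨGrange)
  rw [hΦP.toReal_inter_eq_setIntegral_of_smul_add_restrict (by simp) (by simp) hA₁ hΦi hΦQ]
  exact integral_congr_ae (ae_restrict_of_ae hΦ)

/-- If `C*_A(P, ℋ) ⊆ C*_A(P, 𝒢)` for `𝒢 ⊆ ℋ`, then `𝒢` is sufficient for `ℋ` w.r.t. `A₁`:
any `[0,1]`-valued version of `P[A₁ | 𝒢]` is also a version of `P[A₁ | ℋ]`. -/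
theorem stmt10 {Ω : Type} [mΩ : MeasurableSpace Ω]
    {G H : MeasurableSpace Ω} (hGH : G ≤ H) (hH : H ≤ mΩ)
    (A₁ : Set Ω) (hA₁ : MeasurableSet[mΩ] A₁)
    (P : @Measure Ω mΩ) (hP : @IsProbabilityMeasure Ω mΩ P)
    (hpos : 0 < P A₁) (hlt : P A₁ < 1)
    (hsub : @CAstar Ω mΩ H P A₁ ⊆ @CAstar Ω mΩ G P A₁)
    (ΨG : Ω → ℝ) (hΨGrange : ∀ ω, ΨG ω ∈ Set.Icc (0 : ℝ) 1)
    (hΨG : @IsCondVersion Ω mΩ G P A₁ ΨG) :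
    @IsCondVersion Ω mΩ H P A₁ ΨG :=
  stmt10_general (mΩ := mΩ) hGH hH A₁ hA₁ P hP hsub ΨG hΨGrange hΨG
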